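/- For any diagram δ ⊂ Z×Z of size n and any 1 < i < n, the map D_i^δ : S_n → S_n is an involution. -/

import Mathlib

open scoped Classical

/-- Swap the values `a` and `b` in a word. -/
def swapVals (a b : ℕ) (w : List ℕ) : List ℕ :=
  w.map fun x => if x = a then b else if x = b then a else x

/-- Elementary dual equivalence `d_i`: acts as the identity if `i` lies (positionally)
between `i-1` and `i+1`, and otherwise swaps `i` with the outermost of `i-1`, `i+1`. -/
def delem (i : ℕ) (w : List ℕ) : List ℕ :=
  let p := w.idxOf (i - 1)
  let q := w.idxOf i
  let r := w.idxOf (i + 1)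
  if (p < q ∧ q < r) ∨ (r < q ∧ q < p) then w
  else if (q < p ∧ p < r) ∨ (r < p ∧ p < q) then swapVals i (i + 1) w
  else swapVals i (i - 1) w

/-- The cyclic replacement `a ↦ b ↦ c ↦ a` on the letters of a word. -/
def cycVals (a b c : ℕ) (w : List ℕ) : List ℕ :=
  w.map fun x => if x = a then b else if x = b then c else if x = c then a else x

/-- The map `d̃_i`: identity if `i` lies between `i-1` and `i+1`, otherwise it cyclically
permutes the values `i-1, i, i+1` as in Assaf's construction. -/
def dtil (i : ℕ) (w : List ℕ) : List ℕ :=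
  let p := w.idxOf (i - 1)
  let q := w.idxOf i
  let r := w.idxOf (i + 1)
  if (p < q ∧ q < r) ∨ (r < q ∧ q < p) then w
  else if q < p ∧ q < r then
    (if p < r then cycVals i (i - 1) (i + 1) w else cycVals i (i + 1) (i - 1) w)
  else
    (if p < r then cycVals (i - 1) i (i + 1) w else cycVals (i + 1) i (i - 1) w)

/-- The standardization of a word: rank letters by value, ties broken left to right. -/
def stWord (w : List ℕ) : List ℕ :=
  (w.zipIdx.map Prod.swap).map fun p =>
    1 + ((w.zipIdx.map Prod.swap).filter fun q => q.2 < p.2 ∨ (q.2 = p.2 ∧ q.1 < p.1)).length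

/-- Unstandardization of a permutation: the value `i` is replaced by
`1 +` the number of `j < i` such that `j+1` occurs before `j`. -/
def unstPerm (π : List ℕ) : List ℕ :=
  π.map fun i =>
    1 + ((List.range (i - 1)).filter fun j => π.idxOf (j + 2) < π.idxOf (j + 1)).length

/-- Unstandardization of a word. -/
def unstWord (w : List ℕ) : List ℕ := unstPerm (stWord w)

/-- RSK row insertion of a value into a tableau (rows listed bottom row first). -/
def insertTab : List (List ℕ) → ℕ → List (List ℕ)
  | [], x => [[x]]
  | r :: rs, x =>
    match r.findIdx? (fun y => x < y) with
    | none => (r ++ [x]) :: rs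
    | some j => r.set j x :: insertTab rs (r.getD j 0)

/-- The RSK insertion tableau of a word. -/
def Ptab (w : List ℕ) : List (List ℕ) := w.foldl insertTab []

def UtabAux : ℕ → List ℕ → List (List ℕ)
  | _, [] => []
  | s, a :: rest => ((List.range a).map (· + s + 1)) :: UtabAux (s + a) rest

/-- The superstandard tableau `U_λ`: `1,…,n` filled along the rows of `λ`, bottom row first. -/
def Utab (lam : List ℕ) : List (List ℕ) := (UtabAux 0 lam).filter (· ≠ [])

/-- `w` is a Yamanouchi word of content `lam`. -/
def IsYam (lam : List ℕ) (w : List ℕ) : Prop :=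
  (∀ x ∈ w, 1 ≤ x) ∧
  (∀ i : ℕ, w.count (i + 1) = lam.getD i 0) ∧
  ∀ t : List ℕ, t <:+ w → ∀ i : ℕ, t.count (i + 2) ≤ t.count (i + 1)

/-- `lam` is a partition: weakly decreasing with positive parts. -/
def IsPartition (lam : List ℕ) : Prop :=
  lam.Pairwise (· ≥ ·) ∧ ∀ a ∈ lam, 0 < a

/-- Row reading word of a tableau (rows listed bottom first; read top row first). -/
def rwTab (T : List (List ℕ)) : List ℕ := T.reverse.flatten

def fillAux : List ℕ → List ℕ → List (List ℕ)
  | [], _ => []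
  | a :: rest, w => w.take a :: fillAux rest (w.drop a)

/-- Fill a shape (row lengths, bottom row first) with a word read in row reading order. -/
def fillTab (sh : List ℕ) (w : List ℕ) : List (List ℕ) := (fillAux sh.reverse w).reverse

/-- `T` is a standard Young tableau of partition shape (rows listed bottom first). -/
def IsSYT (T : List (List ℕ)) : Prop :=
  (T.map List.length).Pairwise (· ≥ ·) ∧ (∀ r ∈ T, r ≠ []) ∧
  (rwTab T).Perm (List.range' 1 (rwTab T).length) ∧
  (∀ r ∈ T, r.Pairwise (· < ·)) ∧
  ∀ k, k + 1 < T.length → ∀ j < (T.getD (k + 1) []).length,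
    (T.getD k []).getD j 0 < (T.getD (k + 1) []).getD j 0

/-- An elementary dual equivalence move on tableaux, via the row reading word. -/
def DEMove (T T' : List (List ℕ)) : Prop :=
  ∃ i, 1 < i ∧ i < (rwTab T).length ∧
    T' = fillTab (T.map List.length) (delem i (rwTab T))

/-- Dual equivalence of tableaux: the equivalence relation generated by the moves `d_i`. -/
def DualEquiv : List (List ℕ) → List (List ℕ) → Prop := Relation.EqvGen DEMove

/-- Row reading order on cells `(x, y)` of `ℤ × ℤ` (top rows first, left to right). -/
def ReadingOrder (c d : ℤ × ℤ) : Prop := d.2 < c.2 ∨ (c.2 = d.2 ∧ c.1 < d.1)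

/-- A diagram, presented as its list of cells in row reading order. -/
def IsDiagramList (δ : List (ℤ × ℤ)) : Prop := δ.Pairwise ReadingOrder

def leRO (c d : ℤ × ℤ) : Prop := c = d ∨ ReadingOrder c d

/-- `e` lies in the pistol of the cell `c`: between `c` and the position one row below `c`. -/
def InPistol (c e : ℤ × ℤ) : Prop := leRO c e ∧ leRO e (c.1, c.2 - 1)

/-- A set of indices (into the row reading order of `δ`) lies in a common pistol of `δ`. -/
def Pistoled (δ : List (ℤ × ℤ)) (S : List ℕ) : Prop :=
  ∃ c ∈ δ, ∀ i ∈ S, i < δ.length ∧ InPistol c (δ.getD i (0, 0))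

/-- The involution `D_i^δ` of Assaf. -/
noncomputable def Ddelta (δ : List (ℤ × ℤ)) (i : ℕ) (π : List ℕ) : List ℕ :=
  if Pistoled δ [π.idxOf (i - 1), π.idxOf i, π.idxOf (i + 1)] then dtil i π
  else delem i π

/-- The cell at index `j` of the filling `T_δ(w)` is a descent. -/
def IsDescentAt (δ : List (ℤ × ℤ)) (w : List ℕ) (j : ℕ) : Prop :=
  j < δ.length ∧ ∃ k < δ.length,
    δ.getD k (0, 0) = ((δ.getD j (0, 0)).1, (δ.getD j (0, 0)).2 - 1) ∧
    w.getD k 0 < w.getD j 0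

/-- The set of descent cells of the filling `T_δ(w)`. -/
def DesSet (δ : List (ℤ × ℤ)) (w : List ℕ) : Set (ℤ × ℤ) :=
  {c | ∃ j, j < δ.length ∧ δ.getD j (0, 0) = c ∧ IsDescentAt δ w j}

/-- Number of cells of `δ` strictly above `c` in its column. -/
def legOf (δ : List (ℤ × ℤ)) (c : ℤ × ℤ) : ℕ :=
  (δ.filter fun e => e.1 = c.1 ∧ c.2 < e.2).length

/-- The major index statistic `maj_δ`. -/
noncomputable def majD (δ : List (ℤ × ℤ)) (w : List ℕ) : ℕ :=
  ∑ j ∈ Finset.range δ.length,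
    if IsDescentAt δ w j then 1 + legOf δ (δ.getD j (0, 0)) else 0

/-- Indices `j < k` form an inversion triple of `T_δ(w)` (with the cell below `j`). -/
def InvTripleAt (δ : List (ℤ × ℤ)) (w : List ℕ) (j k : ℕ) : Prop :=
  j < k ∧ k < δ.length ∧
  (δ.getD j (0, 0)).2 = (δ.getD k (0, 0)).2 ∧
  ∃ m < δ.length, δ.getD m (0, 0) = ((δ.getD j (0, 0)).1, (δ.getD j (0, 0)).2 - 1) ∧
    ((w.getD m 0 < w.getD k 0 ∧ w.getD k 0 < w.getD j 0) ∨
     (w.getD j 0 ≤ w.getD m 0 ∧ w.getD m 0 < w.getD k 0) ∨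
     (w.getD k 0 < w.getD j 0 ∧ w.getD j 0 ≤ w.getD m 0))

/-- Inversion pair where the cell below the left cell is missing. -/
def InvPairBelowAt (δ : List (ℤ × ℤ)) (w : List ℕ) (j k : ℕ) : Prop :=
  j < k ∧ k < δ.length ∧
  (δ.getD j (0, 0)).2 = (δ.getD k (0, 0)).2 ∧
  ((δ.getD j (0, 0)).1, (δ.getD j (0, 0)).2 - 1) ∉ δ ∧
  w.getD k 0 < w.getD j 0

/-- Inversion pair where the upper-left cell of the triple is missing. -/
def InvPairAboveAt (δ : List (ℤ × ℤ)) (w : List ℕ) (k m : ℕ) : Prop :=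
  k < δ.length ∧ m < δ.length ∧
  (δ.getD k (0, 0)).2 = (δ.getD m (0, 0)).2 + 1 ∧
  (δ.getD m (0, 0)).1 < (δ.getD k (0, 0)).1 ∧
  ((δ.getD m (0, 0)).1, (δ.getD m (0, 0)).2 + 1) ∉ δ ∧
  w.getD m 0 < w.getD k 0

/-- The inversion statistic `inv_δ(w)`: inversion triples plus inversion pairs. -/
noncomputable def invD (δ : List (ℤ × ℤ)) (w : List ℕ) : ℕ :=
  ((Finset.range δ.length ×ˢ Finset.range δ.length).filter fun p =>
      InvTripleAt δ w p.1 p.2).card +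
  ((Finset.range δ.length ×ˢ Finset.range δ.length).filter fun p =>
      InvPairBelowAt δ w p.1 p.2).card +
  ((Finset.range δ.length ×ˢ Finset.range δ.length).filter fun p =>
      InvPairAboveAt δ w p.1 p.2).card

/-- The cells of the (French) partition diagram of `lam`, in row reading order. -/
def partitionDiagram (lam : List ℕ) : List (ℤ × ℤ) :=
  ((List.range lam.length).reverse.map fun r =>
    (List.range (lam.getD r 0)).map fun x => ((x : ℤ), (r : ℤ))).flatten

/-- Index (in `w`) of the `j`-th from last occurrence of the value `v` (`j ≥ 1`). -/
def posFromLast (w : List ℕ) (v j : ℕ) : ℕ :=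
  (((List.range w.length).filter fun p => w.getD p 0 = v).reverse).getD (j - 1) 0

/-- A Yamanouchi word `w` jams the diagram `δ`. -/
def Jams (δ : List (ℤ × ℤ)) (w : List ℕ) : Prop :=
  ∃ i j : ℕ, 1 ≤ i ∧ 1 ≤ j ∧ j ≤ w.count i ∧ j + 1 ≤ w.count (i + 1) ∧
    Pistoled δ [posFromLast w i j, posFromLast w (i + 1) (j + 1)]

/-- `p` occurs as a strict pattern of `π` at the (increasing) index list `idx`. -/
def StrictPatternAt (p : List ℕ) (π : List ℕ) (idx : List ℕ) : Prop :=
  idx.Pairwise (· < ·) ∧ (∀ i ∈ idx, i < π.length) ∧ idx.length = p.length ∧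
  ∃ k : ℕ, ∀ j < p.length, π.getD (idx.getD j 0) 0 = p.getD j 0 + k

/-- `γ` is a realizable descent set of `δ`. -/
def RealizableIn (γ : Finset (ℤ × ℤ)) (δ : List (ℤ × ℤ)) : Prop :=
  (∀ c ∈ γ, ((c.1, c.2 - 1) : ℤ × ℤ) ∈ δ) ∧
  ∀ x₁ x₂ lo hi : ℤ, x₁ < x₂ → lo < hi →
    ((x₁, hi) : ℤ × ℤ) ∉ γ → ((x₁, lo) : ℤ × ℤ) ∉ γ →
    (∀ j, lo < j → j < hi → ((x₁, j) : ℤ × ℤ) ∈ γ) →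
    ¬ ∀ j, lo < j → j ≤ hi → ((x₂, j) : ℤ × ℤ) ∈ γ

/-- Value of the leading filling at a cell: `1` plus the length of the maximal run of
cells of `γ` weakly below `c` in its column, i.e. `1` off a non-`γ` cell, and one plus
the value below on cells of `γ`. -/
noncomputable def wval (γ : Finset (ℤ × ℤ)) (c : ℤ × ℤ) : ℕ :=
  1 + ((Finset.range γ.card).filter fun m =>
    ∀ l ≤ m, ((c.1, c.2 - (l : ℤ)) : ℤ × ℤ) ∈ γ).card

/-! Both `d_i` and `d̃_i` merely relabel the values `i-1, i, i+1` among themselves, so the set of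
positions these values occupy, and with it the pistol condition, is the same for `π` and for
`D_i^δ(π)`: the second application uses the same map as the first. Each map is an involution by
itself. `d_i` swaps the two values in outer position, which leaves the middle one in the middle.
`d̃_i` applies a 3-cycle that turns the pattern where `i` comes first into the pattern where `i`
comes last and vice versa, and the 3-cycle prescribed there is the inverse of the first one. -/

open Equiv

theorem List.idxOf_map_perm (σ : Equiv.Perm ℕ) (w : List ℕ) (a : ℕ) :
    (w.map σ).idxOf a = w.idxOf (σ⁻¹ a) := by
  simp only [List.idxOf, List.findIdx_map]
  congr 1
  funext x
  simp [Function.comp, eq_symm_apply]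

theorem List.idxOf_ne_idxOf {w : List ℕ} {a b : ℕ} (ha : a ∈ w) (hab : a ≠ b) :
    w.idxOf a ≠ w.idxOf b :=
  fun h => hab ((List.idxOf_inj ha).1 h)

theorem List.map_map_perm_of_mul_eq_one {σ τ : Equiv.Perm ℕ} (h : τ * σ = 1) (w : List ℕ) :
    (w.map σ).map τ = w := by
  rw [List.map_map, ← Perm.coe_mul, h, Perm.coe_one, List.map_id]

/-- The 3-cycle `a ↦ b ↦ c ↦ a` (for distinct `a`, `b`, `c`). -/
def cyc3 {α : Type*} [DecidableEq α] (a b c : α) : Perm α := swap a b * swap b c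

section cyc3
variable {α : Type*} [DecidableEq α] {a b c : α}

theorem cyc3_apply_left (hab : a ≠ b) (hac : a ≠ c) : cyc3 a b c a = b := by
  simp [cyc3, swap_apply_of_ne_of_ne hab hac]

theorem cyc3_apply_mid (hac : a ≠ c) (hbc : b ≠ c) : cyc3 a b c b = c := by
  simp [cyc3, swap_apply_of_ne_of_ne hac.symm hbc.symm]

theorem cyc3_apply_right : cyc3 a b c c = a := by
  simp [cyc3]

theorem cyc3_inv (hac : a ≠ c) (hbc : b ≠ c) : (cyc3 a b c)⁻¹ = cyc3 b a c := by
  rw [inv_eq_iff_mul_eq_one, cyc3, cyc3, swap_comm a b, swap_comm b c]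
  simp only [← mul_assoc]
  rw [swap_mul_swap_mul_swap hbc.symm hac.symm, swap_mul_self]

end cyc3

theorem swapVals_eq_map (a b : ℕ) (w : List ℕ) : swapVals a b w = w.map (swap a b) := rfl

theorem cycVals_eq_map {a b c : ℕ} (hab : a ≠ b) (hbc : b ≠ c) (hac : a ≠ c) (w : List ℕ) :
    cycVals a b c w = w.map (cyc3 a b c) := by
  simp only [cycVals, cyc3]
  congr 1
  funext x
  simp only [Perm.coe_mul, Function.comp, swap_apply_def]
  split_ifs <;> omega

theorem pistoled_map_idxOf_map_perm (δ : List (ℤ × ℤ)) {V : List ℕ} {σ : Perm ℕ}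
    (hσ : ∀ v, σ v ∈ V ↔ v ∈ V) (w : List ℕ) :
    Pistoled δ (V.map (w.map σ).idxOf) ↔ Pistoled δ (V.map w.idxOf) := by
  suffices h : ∀ x, x ∈ V.map (w.map σ).idxOf ↔ x ∈ V.map w.idxOf by
    simp only [Pistoled, h]
  simp only [List.mem_map, List.idxOf_map_perm]
  refine fun x => ⟨?_, ?_⟩
  · rintro ⟨v, hv, rfl⟩
    exact ⟨σ⁻¹ v, (hσ _).1 (by simpa using hv), rfl⟩
  · rintro ⟨u, hu, rfl⟩
    exact ⟨σ u, (hσ u).2 hu, by simp⟩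

section
variable {i : ℕ}

theorem delem_eq_map_perm (w : List ℕ) : ∃ σ : Perm ℕ,
    (∀ v, σ v ∈ [i - 1, i, i + 1] ↔ v ∈ [i - 1, i, i + 1]) ∧ delem i w = w.map σ := by
  simp only [delem, swapVals_eq_map]
  split_ifs
  · exact ⟨1, fun _ => Iff.rfl, (List.map_id w).symm⟩
  all_goals
    refine ⟨_, fun v => ?_, rfl⟩
    simp only [List.mem_cons, List.not_mem_nil, or_false, swap_apply_def]
    split_ifs <;> omega

theorem dtil_eq_map_perm (hi : 0 < i) (w : List ℕ) : ∃ σ : Perm ℕ,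
    (∀ v, σ v ∈ [i - 1, i, i + 1] ↔ v ∈ [i - 1, i, i + 1]) ∧ dtil i w = w.map σ := by
  simp (disch := omega) only [dtil, cycVals_eq_map]
  split_ifs
  · exact ⟨1, fun _ => Iff.rfl, (List.map_id w).symm⟩
  all_goals
    refine ⟨_, fun v => ?_, rfl⟩
    simp only [List.mem_cons, List.not_mem_nil, or_false, cyc3, Perm.mul_apply, swap_apply_def]
    split_ifs <;> omega

theorem pistoled_delem_iff (δ : List (ℤ × ℤ)) (w : List ℕ) :
    Pistoled δ [(delem i w).idxOf (i - 1), (delem i w).idxOf i, (delem i w).idxOf (i + 1)] ↔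
      Pistoled δ [w.idxOf (i - 1), w.idxOf i, w.idxOf (i + 1)] := by
  obtain ⟨σ, hσ, h⟩ := delem_eq_map_perm (i := i) w
  rw [h]
  exact pistoled_map_idxOf_map_perm δ hσ w

theorem pistoled_dtil_iff (hi : 0 < i) (δ : List (ℤ × ℤ)) (w : List ℕ) :
    Pistoled δ [(dtil i w).idxOf (i - 1), (dtil i w).idxOf i, (dtil i w).idxOf (i + 1)] ↔
      Pistoled δ [w.idxOf (i - 1), w.idxOf i, w.idxOf (i + 1)] := by
  obtain ⟨σ, hσ, h⟩ := dtil_eq_map_perm hi w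
  rw [h]
  exact pistoled_map_idxOf_map_perm δ hσ w

variable {w : List ℕ}

theorem delem_delem (hi : 0 < i) (hm : i - 1 ∈ w) (h0 : i ∈ w) : delem i (delem i w) = w := by
  have hpq := List.idxOf_ne_idxOf hm (show i - 1 ≠ i by omega)
  have hqr := List.idxOf_ne_idxOf h0 (show i ≠ i + 1 by omega)
  have hpr := List.idxOf_ne_idxOf hm (show i - 1 ≠ i + 1 by omega)
  simp only [delem, swapVals_eq_map]
  split_ifs <;> simp (disch := omega) only [List.idxOf_map_perm, swap_inv, swap_apply_left,
      swap_apply_right, swap_apply_of_ne_of_ne] at * <;>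
    first | omega | exact List.map_map_perm_of_mul_eq_one (swap_mul_self _ _) w

theorem dtil_dtil (hi : 0 < i) (hm : i - 1 ∈ w) (h0 : i ∈ w) : dtil i (dtil i w) = w := by
  have hpq := List.idxOf_ne_idxOf hm (show i - 1 ≠ i by omega)
  have hqr := List.idxOf_ne_idxOf h0 (show i ≠ i + 1 by omega)
  have hpr := List.idxOf_ne_idxOf hm (show i - 1 ≠ i + 1 by omega)
  simp (disch := omega) only [dtil, cycVals_eq_map]
  split_ifs <;> simp (disch := omega) only [List.idxOf_map_perm, cyc3_inv, cyc3_apply_left,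
      cyc3_apply_mid, cyc3_apply_right] at * <;>
    first
    | omega
    | exact List.map_map_perm_of_mul_eq_one
        (by rw [← cyc3_inv (by omega) (by omega), inv_mul_cancel]) w

end

theorem Ddelta_involutive_general (δ : List (ℤ × ℤ)) (i : ℕ)
    (π : List ℕ) (hπ : π.Perm (List.range' 1 δ.length))
    (h1 : 1 < i) (h2 : i < δ.length) :
    Ddelta δ i (Ddelta δ i π) = π := by
  have hi : 0 < i := by omega
  have hm : i - 1 ∈ π := hπ.mem_iff.2 (List.mem_range'_1.2 ⟨by omega, by omega⟩)
  have h0 : i ∈ π := hπ.mem_iff.2 (List.mem_range'_1.2 ⟨by omega, by omega⟩)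
  by_cases hP : Pistoled δ [π.idxOf (i - 1), π.idxOf i, π.idxOf (i + 1)]
  · have hD : Ddelta δ i π = dtil i π := if_pos hP
    rw [hD, Ddelta, if_pos ((pistoled_dtil_iff hi δ π).2 hP), dtil_dtil hi hm h0]
  · have hD : Ddelta δ i π = delem i π := if_neg hP
    rw [hD, Ddelta, if_neg (mt (pistoled_delem_iff δ π).1 hP), delem_delem hi hm h0]

theorem Ddelta_involutive (δ : List (ℤ × ℤ)) (hδ : IsDiagramList δ) (i : ℕ)
    (π : List ℕ) (hπ : π.Perm (List.range' 1 δ.length))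
    (h1 : 1 < i) (h2 : i < δ.length) :
    Ddelta δ i (Ddelta δ i π) = π :=
  Ddelta_involutive_general δ i π hπ h1 h2
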